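/- Let T be an injective analytic operator with the wandering subspace property, and let M := closed span of ⋃_{w ∈ bpe(T)} E_w*(ker T*). Then either M = H or M⊥ is infinite dimensional. -/

import Mathlib

open ContinuousLinearMap Submodule Filter

noncomputable section

variable {H : Type*} [NormedAddCommGroup H] [InnerProductSpace ℂ H] [CompleteSpace H]

/-- The wandering subspace `ker T*`. -/
def kerAdj (T : H →L[ℂ] H) : Submodule ℂ H := LinearMap.ker (ContinuousLinearMap.adjoint T : H →ₗ[ℂ] H)

/-- `T` has the wandering subspace property: the closed linear span of
`⋃ₙ Tⁿ(ker T*)` is all of `H`. -/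
def WSP (T : H →L[ℂ] H) : Prop :=
  (⨆ n : ℕ, (kerAdj T).map ((T ^ n : H →L[ℂ] H) : H →ₗ[ℂ] H)).topologicalClosure = ⊤

/-- `w` is a bounded point evaluation for `T`: `‖p(w)‖ ≤ c ‖p(T)‖` for all
`ker T*`-valued polynomials `p`, where `p(T) = Σ Tⁿ xₙ` for `p(z) = Σ xₙ zⁿ`. -/
def IsBPE (T : H →L[ℂ] H) (w : ℂ) : Prop :=
  ∃ c > (0 : ℝ), ∀ (k : ℕ) (x : ℕ → H), (∀ n, x n ∈ kerAdj T) →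
    ‖∑ n ∈ Finset.range (k + 1), w ^ n • x n‖ ≤
      c * ‖∑ n ∈ Finset.range (k + 1), (T ^ n) (x n)‖

/-- `E` is the (continuous extension of the) evaluation operator at `w`:
it takes values in `ker T*` and sends `p(T)` to `p(w)`. -/
def IsEval (T : H →L[ℂ] H) (w : ℂ) (E : H →L[ℂ] H) : Prop :=
  (∀ y, E y ∈ kerAdj T) ∧
    ∀ (k : ℕ) (x : ℕ → H), (∀ n, x n ∈ kerAdj T) →
      E (∑ n ∈ Finset.range (k + 1), (T ^ n) (x n)) =
        ∑ n ∈ Finset.range (k + 1), w ^ n • x n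

/-! Each evaluation operator satisfies `E_w T = w E_w`: both sides agree on `Tⁿ(ker T*)` and the
span of these is dense. Since `E_w` takes values in `ker T*`, the orthogonal complement of
`E_w*(ker T*)` is `ker E_w`, so `M⊥ = ⋂_w ker E_w` is `T`-invariant. An injective operator maps a
finite-dimensional invariant subspace onto itself, so such an `M⊥` lies in `⋂ₙ Tⁿ(H) = 0`. -/

theorem ContinuousLinearMap.orthogonal_map_adjoint {𝕜 E F : Type*} [RCLike 𝕜]
    [NormedAddCommGroup E] [InnerProductSpace 𝕜 E] [CompleteSpace E]
    [NormedAddCommGroup F] [InnerProductSpace 𝕜 F] [CompleteSpace F]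
    (A : E →L[𝕜] F) (K : Submodule 𝕜 F) :
    (K.map (adjoint A : F →ₗ[𝕜] E))ᗮ = Kᗮ.comap (A : E →ₗ[𝕜] F) := by
  ext y
  simp only [Submodule.mem_orthogonal, Submodule.mem_map, Submodule.mem_comap, coe_coe,
    forall_exists_index, and_imp, forall_apply_eq_imp_iff₂, adjoint_inner_left]

theorem ContinuousLinearMap.orthogonal_map_adjoint_eq_ker {𝕜 E F : Type*} [RCLike 𝕜]
    [NormedAddCommGroup E] [InnerProductSpace 𝕜 E] [CompleteSpace E]
    [NormedAddCommGroup F] [InnerProductSpace 𝕜 F] [CompleteSpace F]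
    {A : E →L[𝕜] F} {K : Submodule 𝕜 F} (hA : ∀ y, A y ∈ K) :
    (K.map (adjoint A : F →ₗ[𝕜] E))ᗮ = LinearMap.ker (A : E →ₗ[𝕜] F) := by
  rw [A.orthogonal_map_adjoint]
  ext y
  simpa using
    ⟨fun h => (Submodule.mem_bot 𝕜).1 (K.inf_orthogonal_eq_bot ▸ ⟨hA y, h⟩),
      fun h => h ▸ Kᗮ.zero_mem⟩

theorem Submodule.eq_bot_of_le_comap_of_iInf_range_pow_eq_bot {K V : Type*} [Field K]
    [AddCommGroup V] [Module K V] {f : V →ₗ[K] V} (hf : Function.Injective f)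
    (hf_range : ⨅ n : ℕ, LinearMap.range (f ^ n) = ⊥)
    {p : Submodule K V} [FiniteDimensional K p] (hp : p ≤ p.comap f) : p = ⊥ := by
  have hsurj : Set.SurjOn f p p := (LinearMap.injOn_iff_surjOn hp).1 hf.injOn
  rw [eq_bot_iff, ← hf_range]
  intro x hx
  refine Submodule.mem_iInf _ |>.2 fun n => ?_
  obtain ⟨y, -, hy⟩ := hsurj.iterate n hx
  exact ⟨y, by rwa [Module.End.coe_pow]⟩

namespace IsEval

variable {T : H →L[ℂ] H} {w : ℂ} {E : H →L[ℂ] H}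

theorem apply_pow_apply (hE : IsEval T w E) {x : H} (hx : x ∈ kerAdj T) (n : ℕ) :
    E ((T ^ n) x) = w ^ n • x := by
  have h := hE.2 n (fun j => if j = n then x else 0) (fun j => by
    by_cases hj : j = n <;> simp [hj, hx, (kerAdj T).zero_mem])
  simpa [apply_ite, Finset.sum_ite_eq', smul_ite] using h

theorem comp_eq_smul (hT : WSP T) (hE : IsEval T w E) : E ∘L T = w • E := by
  have hker :
      (⊤ : Submodule ℂ H) ≤ LinearMap.ker ((E ∘L T - w • E : H →L[ℂ] H) : H →ₗ[ℂ] H) := by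
    rw [← hT]
    refine topologicalClosure_minimal _ (iSup_le fun n => ?_) (isClosed_ker _)
    rintro _ ⟨x, hx, rfl⟩
    have h := hE.apply_pow_apply hx (n + 1)
    rw [pow_succ', mul_apply_eq_comp] at h
    show E (T ((T ^ n) x)) - w • E ((T ^ n) x) = 0
    rw [h, hE.apply_pow_apply hx, smul_smul, ← pow_succ', sub_self]
  ext y
  simpa [sub_eq_zero] using hker (mem_top (x := y))

end IsEval

theorem stmt_15_general (T : H →L[ℂ] H) (hT : WSP T)
    (hinj : Function.Injective T)
    (han : (⨅ n : ℕ, LinearMap.range ((T ^ n : H →L[ℂ] H) : H →ₗ[ℂ] H)) = ⊥)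
    (E : ℂ → (H →L[ℂ] H)) (hE : ∀ w : ℂ, IsBPE T w → IsEval T w (E w))
    (M : Submodule ℂ H)
    (hM : M = (⨆ w ∈ {w : ℂ | IsBPE T w},
      (kerAdj T).map (ContinuousLinearMap.adjoint (E w) : H →ₗ[ℂ] H)).topologicalClosure) :
    M = ⊤ ∨ ¬ FiniteDimensional ℂ ↥(Mᗮ) := by
  set N := ⨆ w ∈ {w : ℂ | IsBPE T w}, (kerAdj T).map (adjoint (E w) : H →ₗ[ℂ] H) with hN_def
  have hN : Nᗮ = ⨅ w ∈ {w : ℂ | IsBPE T w}, LinearMap.ker (E w : H →ₗ[ℂ] H) := by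
    rw [hN_def, iSup_subtype', ← iInf_orthogonal, iInf_subtype']
    exact iInf_congr fun w => orthogonal_map_adjoint_eq_ker (hE w w.2).1
  have hN_invariant : Nᗮ ≤ Nᗮ.comap (T : H →ₗ[ℂ] H) := by
    intro y hy
    simp only [hN, Submodule.mem_comap, Submodule.mem_iInf, LinearMap.mem_ker, coe_coe] at hy ⊢
    intro w hw
    rw [← comp_apply, (hE w hw).comp_eq_smul hT, smul_apply, hy w hw, smul_zero]
  simp only [toLinearMap_pow] at han
  rw [hM, orthogonal_closure, ← orthogonal_orthogonal_eq_closure]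
  rw [or_iff_not_imp_right, not_not]
  intro hfin
  rw [eq_bot_of_le_comap_of_iInf_range_pow_eq_bot hinj han hN_invariant, bot_orthogonal_eq_top]

/-- for injective analytic `T`, either `M = H` or `M⊥` is infinite dimensional. -/
theorem stmt_15 [TopologicalSpace.SeparableSpace H] (T : H →L[ℂ] H) (hT : WSP T)
    (hinj : Function.Injective T)
    (han : (⨅ n : ℕ, LinearMap.range ((T ^ n : H →L[ℂ] H) : H →ₗ[ℂ] H)) = ⊥)
    (E : ℂ → (H →L[ℂ] H)) (hE : ∀ w : ℂ, IsBPE T w → IsEval T w (E w))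
    (M : Submodule ℂ H)
    (hM : M = (⨆ w ∈ {w : ℂ | IsBPE T w},
      (kerAdj T).map (ContinuousLinearMap.adjoint (E w) : H →ₗ[ℂ] H)).topologicalClosure) :
    M = ⊤ ∨ ¬ FiniteDimensional ℂ ↥(Mᗮ) :=
  stmt_15_general T hT hinj han E hE M hM
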